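/- arXiv:1112.5614 — 10 statements merged into one kernel-verified Lean document; each statement's English description precedes it below -/
import Mathlib

section
/- If α and β are functions ℕ → ℕ such that neither α nor β is surjective-but-not-injective, then their composition is not surjective-but-not-injective. Equivalently, T(ℕ) \ Sur(ℕ) is closed under composition, where Sur(ℕ) is the set of surjective non-injective maps. -/
/-- `Sur`: surjective but not injective maps ℕ → ℕ. -/
def SurSet (α : ℕ → ℕ) : Prop := Function.Surjective α ∧ ¬ Function.Injective α

/-- T(ℕ) \ Sur(ℕ) is closed under composition (α first, then β). -/
theorem compl_Sur_closed :
    ∀ α β : ℕ → ℕ, ¬ SurSet α → ¬ SurSet β → ¬ SurSet (β ∘ α) := by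
  rintro α β hα hβ ⟨hsur, hninj⟩
  have hβsur : Function.Surjective β := hsur.of_comp
  have hβinj : Function.Injective β := by
    by_contra h
    exact hβ ⟨hβsur, h⟩
  have hαsur : Function.Surjective α := by
    intro n
    obtain ⟨m, hm⟩ := hsur (β n)
    exact ⟨m, hβinj hm⟩
  have hαninj : ¬ Function.Injective α := fun h => hninj (hβinj.comp h)
  exact hα ⟨hαsur, hαninj⟩
end

section
/- For any surjective non-injective map α : ℕ → ℕ and any surjective non-injective β : ℕ → ℕ, there exists a non-surjective map δ : ℕ → ℕ such that β = δ followed by α, i.e. β(x) = α(δ(x)) for all x. Consequently T(ℕ) \ Sur(ℕ) together with any element of Sur(ℕ) generates a semigroup containing Sur(ℕ). -/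
/-- A set of transformations closed under composition. -/
def IsSubsemigroupT (S : Set (ℕ → ℕ)) : Prop :=
  ∀ f g : ℕ → ℕ, f ∈ S → g ∈ S → (g ∘ f) ∈ S

lemma key : ∀ α β : ℕ → ℕ, SurSet α → SurSet β →
    ∃ δ : ℕ → ℕ, ¬ Function.Surjective δ ∧ β = α ∘ δ := by
  intro α β hα hβ
  obtain ⟨hαs, hαi⟩ := hα
  -- section of α
  set s : ℕ → ℕ := fun y => Nat.find (hαs y) with hs
  have hsec : ∀ y, α (s y) = y := fun y => Nat.find_spec (hαs y)
  refine ⟨s ∘ β, ?_, ?_⟩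
  · intro hsur
    apply hαi
    intro a b hab
    obtain ⟨x, hx⟩ := hsur a
    obtain ⟨y, hy⟩ := hsur b
    have ha : s (α a) = a := by
      rw [← hx]; simp only [Function.comp]
      congr 1
      exact hsec _
    have hb : s (α b) = b := by
      rw [← hy]; simp only [Function.comp]
      congr 1
      exact hsec _
    rw [← ha, ← hb, hab]
  · funext x
    simp [hsec]

/-- For surjective non-injective α, β, there is a non-surjective δ with
β = δ followed by α; consequently any subsemigroup containing T(ℕ) \ Sur(ℕ)
and some element of Sur(ℕ) contains all of Sur(ℕ). -/
theorem compl_Sur_with_sur_generates :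
    (∀ α β : ℕ → ℕ, SurSet α → SurSet β →
      ∃ δ : ℕ → ℕ, ¬ Function.Surjective δ ∧ β = α ∘ δ) ∧
    (∀ α : ℕ → ℕ, SurSet α →
      ∀ S : Set (ℕ → ℕ), IsSubsemigroupT S → (∀ f, ¬ SurSet f → f ∈ S) →
        α ∈ S → ∀ β, SurSet β → β ∈ S) := by
  constructor
  · exact key
  · intro α hα S hS hns hαS β hβ
    obtain ⟨δ, hδ, hcomp⟩ := key α β hα hβ
    have hδS : δ ∈ S := hns δ (fun h => hδ h.1)
    have := hS δ α hδS hαS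
    rwa [← hcomp] at this
end

section
/- The set C_p(ℕ) := {α : ℕ → ℕ | the set {y : α⁻¹({y}) is infinite} is infinite} has the property that its complement T(ℕ) \ C_p(ℕ) is a maximal subsemigroup of T(ℕ): it is closed under composition, and for every α ∈ C_p(ℕ), the subsemigroup generated by (T(ℕ) \ C_p(ℕ)) ∪ {α} equals T(ℕ). -/
/-!
Closure: an infinite fibre of `β ∘ α` over `y` is either an infinite fibre of `β`, or (since a
finite union of finite sets is finite) contains an infinite fibre of `α` over some `z` with
`β z = y`; so `β ∘ α` has at most finitely many infinite fibres when `α` and `β` do.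

Maximality: if `α` has infinitely many infinite fibres, enumerate them injectively by
`Y : ℕ → ℕ` and let `q` be a left inverse of `Y`, which has at most one infinite fibre. Every
fibre of `q ∘ α` is infinite, so any `f` is `q ∘ α ∘ h` for an injective `h`, and `q`, `h`
lie outside `C_p`.
-/

/-- `C_p`: maps with infinitely many infinite fibers. -/
def CpSet (α : ℕ → ℕ) : Prop := {y : ℕ | (α ⁻¹' {y}).Infinite}.Infinite

open Function Set

section Fibers

variable {α β γ : Type*}

theorem setOf_preimage_comp_infinite_subset (f : α → β) (g : β → γ) :
    {c | ((g ∘ f) ⁻¹' {c}).Infinite} ⊆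
      {c | (g ⁻¹' {c}).Infinite} ∪ g '' {b | (f ⁻¹' {b}).Infinite} := by
  intro c hc
  by_contra hnot
  simp only [mem_union, mem_ofPred_eq, mem_image, not_or, not_exists, not_and,
    not_infinite] at hnot
  obtain ⟨hg, hf⟩ := hnot
  have hcover : (g ∘ f) ⁻¹' {c} = ⋃ b ∈ g ⁻¹' {c}, f ⁻¹' {b} := by
    ext; simp
  refine hc ?_
  rw [hcover]
  exact hg.biUnion fun b hb => not_infinite.mp fun hb' => hf b hb' hb

theorem setOf_preimage_invFun_infinite_subsingleton [Nonempty α] (Y : α → β) :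
    {a | (invFun Y ⁻¹' {a}).Infinite}.Subsingleton := by
  -- off the range of `Y`, `invFun Y` is constant; on it, `invFun Y b = a` forces `b = Y a`
  suffices h : {a | (invFun Y ⁻¹' {a}).Infinite} ⊆ {Classical.choice ‹Nonempty α›} from
    subsingleton_singleton.anti h
  intro a ha
  by_contra hne
  refine ha ((finite_singleton (Y a)).subset fun b hb => ?_)
  by_cases hrange : ∃ a', Y a' = b
  · rw [mem_singleton_iff, ← invFun_eq hrange, show invFun Y b = a from hb]
  · exact absurd (hb.symm.trans (invFun_neg hrange)) hne

theorem preimage_invFun_comp_infinite [Nonempty α] {g : γ → β} {Y : α → β}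
    (hY : Injective Y) (hgY : ∀ a, (g ⁻¹' {Y a}).Infinite) (a : α) :
    ((invFun Y ∘ g) ⁻¹' {a}).Infinite :=
  (hgY a).mono fun c hc => by
    simp only [mem_preimage, comp_apply, mem_singleton_iff] at hc ⊢
    rw [hc, leftInverse_invFun hY a]

theorem exists_injective_comp_eq_of_preimage_infinite {g : α → β}
    (hg : ∀ b, (g ⁻¹' {b}).Infinite) (f : ℕ → β) : ∃ h : ℕ → α, Injective h ∧ g ∘ h = f := by
  let e : ∀ b, ℕ ↪ g ⁻¹' {b} := fun b => (hg b).natEmbedding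
  have he : ∀ b b' n m, (e b n : α) = e b' m → b = b' → n = m := by
    rintro b b' n m hnm rfl
    exact (e b).injective (Subtype.ext hnm)
  have hge : ∀ n, g (e (f n) n) = f n := fun n => (e (f n) n).2
  refine ⟨fun n => e (f n) n, fun n m hnm => he _ _ n m hnm ?_, funext hge⟩
  rw [← hge n, ← hge m]
  exact congrArg g hnm

end Fibers

theorem not_cpSet_comp {α β : ℕ → ℕ} (hα : ¬ CpSet α) (hβ : ¬ CpSet β) : ¬ CpSet (β ∘ α) :=
  fun h => h.mono (setOf_preimage_comp_infinite_subset α β) <|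
    (not_infinite.mp hβ).union ((not_infinite.mp hα).image β)

theorem Function.Injective.not_cpSet {h : ℕ → ℕ} (hh : Injective h) : ¬ CpSet h := fun hc => by
  obtain ⟨y, hy⟩ := hc.nonempty
  exact hy ((finite_singleton y).preimage hh.injOn)

theorem not_cpSet_invFun (Y : ℕ → ℕ) : ¬ CpSet (invFun Y) :=
  fun hc => hc (setOf_preimage_invFun_infinite_subsingleton Y).finite

/-- T(ℕ) \ C_p(ℕ) is a maximal subsemigroup: it is closed under composition, and
adjoining any element of C_p(ℕ) generates all of T(ℕ). -/
theorem compl_Cp_maximal :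
    (∀ α β : ℕ → ℕ, ¬ CpSet α → ¬ CpSet β → ¬ CpSet (β ∘ α)) ∧
    (∀ α : ℕ → ℕ, CpSet α →
      ∀ S : Set (ℕ → ℕ), IsSubsemigroupT S → (∀ f, ¬ CpSet f → f ∈ S) →
        α ∈ S → S = Set.univ) := by
  refine ⟨fun α β => not_cpSet_comp, fun α hα S hS hcompl hαS => ?_⟩
  refine eq_univ_of_forall fun f => ?_
  let e := Set.Infinite.natEmbedding {y | (α ⁻¹' {y}).Infinite} hα
  let Y : ℕ → ℕ := Subtype.val ∘ e
  have hY : Injective Y := Subtype.val_injective.comp e.injective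
  obtain ⟨h, hh, rfl⟩ := exists_injective_comp_eq_of_preimage_infinite
    (preimage_invFun_comp_infinite hY fun n => (e n).2) f
  exact hS (α ∘ h) (invFun Y) (hS h α (hcompl h hh.not_cpSet) hαS)
    (hcompl _ (not_cpSet_invFun Y))
end

section
/- If α, β : ℕ → ℕ both fail to be in IF(ℕ) (i.e., each has either finite collapse, or infinite defect), then the composite x ↦ β(α(x)) is not in IF(ℕ). Hence T(ℕ) \ IF(ℕ) is a subsemigroup of T(ℕ). -/
/-- `IF`: maps with finite defect and infinite collapse. -/
def IFSet (γ : ℕ → ℕ) : Prop :=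
  ((Set.range γ)ᶜ : Set ℕ).Finite ∧ {x : ℕ | ∃ y, y < x ∧ γ y = γ x}.Infinite

/-- Collapse set of a map. -/
private def Col (γ : ℕ → ℕ) : Set ℕ := {x | ∃ y, y < x ∧ γ y = γ x}

private lemma injOn_compl_col (γ : ℕ → ℕ) : Set.InjOn γ (Col γ)ᶜ := by
  intro x hx x' hx' h
  by_contra hne
  rcases lt_or_gt_of_ne hne with hlt | hgt
  · exact hx' ⟨x, hlt, h⟩
  · exact hx ⟨x', hgt, h.symm⟩

private lemma preimage_singleton_finite {γ : ℕ → ℕ} (h : (Col γ).Finite) (k : ℕ) :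
    (γ ⁻¹' {k}).Finite := by
  have h1 : (γ ⁻¹' {k} ∩ (Col γ)ᶜ).Finite := by
    apply Set.Subsingleton.finite
    intro a ha b hb
    apply injOn_compl_col γ ha.2 hb.2
    have h1 : γ a = k := ha.1
    have h2 : γ b = k := hb.1
    rw [h1, h2]
  have hsub : γ ⁻¹' {k} ⊆ (γ ⁻¹' {k} ∩ (Col γ)ᶜ) ∪ Col γ := by
    intro a ha
    by_cases hc : a ∈ Col γ
    · exact Or.inr hc
    · exact Or.inl ⟨ha, hc⟩
  exact (h1.union h).subset hsub

private lemma K_finite {γ : ℕ → ℕ} (h : (Col γ).Finite) :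
    {a : ℕ | ∃ b, b ≠ a ∧ γ b = γ a}.Finite := by
  have hsub : {a : ℕ | ∃ b, b ≠ a ∧ γ b = γ a} ⊆ Col γ ∪ ⋃ b ∈ Col γ, Set.Iio b := by
    rintro a ⟨b, hne, heq⟩
    rcases lt_or_gt_of_ne hne with hlt | hgt
    · exact Or.inl ⟨b, hlt, heq⟩
    · exact Or.inr (Set.mem_biUnion ⟨a, hgt, heq.symm⟩ hgt)
  exact (h.union (h.biUnion fun b _ => Set.finite_Iio b)).subset hsub

/-- T(ℕ) \ IF(ℕ) is a subsemigroup of T(ℕ). -/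
theorem compl_IF_closed :
    ∀ α β : ℕ → ℕ, ¬ IFSet α → ¬ IFSet β → ¬ IFSet (β ∘ α) := by
  intro α β hα hβ h
  obtain ⟨hdef, hcol⟩ := h
  -- β has finite defect
  have hβdef : ((Set.range β)ᶜ : Set ℕ).Finite :=
    hdef.subset (Set.compl_subset_compl.mpr (Set.range_comp_subset_range α β))
  -- hence β has finite collapse
  have hβcol : (Col β).Finite := Set.not_infinite.mp (fun h' => hβ ⟨hβdef, h'⟩)
  by_cases hαcol : (Col α).Finite
  · -- α has finite collapse: then β ∘ α has finite collapse, contradiction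
    have hK : {a : ℕ | ∃ b, b ≠ a ∧ β b = β a}.Finite := K_finite hβcol
    have hpre : (α ⁻¹' {a : ℕ | ∃ b, b ≠ a ∧ β b = β a}).Finite := by
      rw [← Set.biUnion_preimage_singleton]
      exact hK.biUnion fun k _ => preimage_singleton_finite hαcol k
    have hsub : Col (β ∘ α) ⊆ Col α ∪ α ⁻¹' {a : ℕ | ∃ b, b ≠ a ∧ β b = β a} := by
      rintro x ⟨y, hy, heq⟩
      by_cases hax : α y = α x
      · exact Or.inl ⟨y, hy, hax⟩
      · exact Or.inr ⟨α y, hax, heq⟩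
    exact absurd hcol (Set.not_infinite.mpr ((hαcol.union hpre).subset hsub))
  · -- α has infinite defect: then β ∘ α has infinite defect, contradiction
    have hM : ((Set.range α)ᶜ : Set ℕ).Infinite := by
      intro hf
      exact hα ⟨hf, hαcol⟩
    have hinj : Set.InjOn β ((Set.range α)ᶜ \ Col β) :=
      (injOn_compl_col β).mono (fun x hx => hx.2)
    have himg : (β '' ((Set.range α)ᶜ \ Col β)).Infinite := (hM.diff hβcol).image hinj
    have hS : ((β '' ((Set.range α)ᶜ \ Col β)) \ (β '' Col β)).Infinite :=
      himg.diff (hβcol.image β)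
    have hsub : (β '' ((Set.range α)ᶜ \ Col β)) \ (β '' Col β) ⊆ (Set.range (β ∘ α))ᶜ := by
      rintro b ⟨⟨m, hm, rfl⟩, hnot⟩
      rintro ⟨x, hx⟩
      have hx' : β (α x) = β m := hx
      have hne : α x ≠ m := fun he => hm.1 ⟨x, he⟩
      rcases lt_or_gt_of_ne hne with hlt | hgt
      · exact hm.2 ⟨α x, hlt, hx'⟩
      · exact hnot ⟨α x, ⟨m, hgt, hx'.symm⟩, hx'⟩
    exact hS (hdef.subset hsub)
end

section
/- Let S be a maximal subsemigroup of T(ℕ). Then S contains every function ℕ → ℕ of finite rank. -/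
/-- S is a maximal subsemigroup of T(ℕ). -/
def IsMaximalSubsemigroupT (S : Set (ℕ → ℕ)) : Prop :=
  IsSubsemigroupT S ∧ S ≠ Set.univ ∧
    ∀ T : Set (ℕ → ℕ), IsSubsemigroupT T → S ⊆ T → T = S ∨ T = Set.univ

/-- Every map factors as a composition of two infinite-rank maps. -/
lemma factor_infinite (f : ℕ → ℕ) :
    ∃ g h : ℕ → ℕ, ¬ (Set.range g).Finite ∧ ¬ (Set.range h).Finite ∧ h ∘ g = f := by
  refine ⟨fun n => 2 * n, fun n => if n % 2 = 0 then f (n / 2) else n / 2, ?_, ?_, ?_⟩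
  · exact Set.infinite_range_of_injective (fun a b h => by omega)
  · have hs : Function.Surjective (fun n => if n % 2 = 0 then f (n / 2) else n / 2) := by
      intro m
      exact ⟨2 * m + 1, by simp [Nat.mul_add_mod]; omega⟩
    rw [hs.range_eq]
    exact Set.infinite_univ
  · funext n
    simp [Nat.mul_mod_right]

/-- Every maximal subsemigroup of T(ℕ) contains all finite-rank maps. -/
theorem maximal_contains_finite_rank :
    ∀ S : Set (ℕ → ℕ), IsMaximalSubsemigroupT S →
      ∀ f : ℕ → ℕ, (Set.range f).Finite → f ∈ S := by
  intro S ⟨hS, hne, hmax⟩ f hf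
  set T : Set (ℕ → ℕ) := S ∪ {u | (Set.range u).Finite} with hT
  have hTsub : IsSubsemigroupT T := by
    intro a b ha hb
    rcases ha with ha | ha
    · rcases hb with hb | hb
      · exact Or.inl (hS a b ha hb)
      · refine Or.inr ?_
        have : Set.range (b ∘ a) ⊆ Set.range b := Set.range_comp_subset_range a b
        exact hb.subset this
    · refine Or.inr ?_
      have : Set.range (b ∘ a) = b '' Set.range a := Set.range_comp b a
      rw [Set.mem_setOf_eq, this]
      exact ha.image b
  rcases hmax T hTsub Set.subset_union_left with h | h
  · have : f ∈ T := Or.inr hf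
    rwa [h] at this
  · exfalso
    apply hne
    have hinf : ∀ u : ℕ → ℕ, ¬ (Set.range u).Finite → u ∈ S := by
      intro u hu
      have : u ∈ T := h ▸ Set.mem_univ u
      rcases this with h1 | h1
      · exact h1
      · exact absurd h1 hu
    ext v
    simp only [Set.mem_univ, iff_true]
    obtain ⟨g, hfun, hg, hh, hcomp⟩ := factor_infinite v
    exact hcomp ▸ hS g hfun (hinf g hg) (hinf hfun hh)
end

section
/- Let S be a subsemigroup of T(ℕ) containing Sur(ℕ) (all surjective non-injective maps), containing at least one injective non-surjective map, and containing at least one element of FI(ℕ). Then S = T(ℕ). -/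
def InjSet (α : ℕ → ℕ) : Prop := Function.Injective α ∧ ¬ Function.Surjective α

def FISet (γ : ℕ → ℕ) : Prop :=
  ((Set.range γ)ᶜ : Set ℕ).Infinite ∧ {x : ℕ | ∃ y, y < x ∧ γ y = γ x}.Finite

/-- If a subsemigroup contains all surjective non-injective maps and some injective
map with infinite co-range, it contains everything. -/
lemma mem_of_inj_coinfinite (S : Set (ℕ → ℕ)) (hS : IsSubsemigroupT S)
    (hSur : ∀ f, SurSet f → f ∈ S) (j : ℕ → ℕ) (hjS : j ∈ S)
    (hjInj : Function.Injective j) (hjCo : ((Set.range j)ᶜ : Set ℕ).Infinite)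
    (f : ℕ → ℕ) : f ∈ S := by
  classical
  have hD : {y : ℕ | y ∉ Set.range j}.Infinite := hjCo
  set nthD : ℕ → ℕ := Nat.nth (fun y => y ∉ Set.range j) with hnthD
  have hnthMem : ∀ n, nthD n ∉ Set.range j := fun n => Nat.nth_mem_of_infinite hD n
  have hnthInj : Function.Injective nthD := Nat.nth_injective hD
  set a : ℕ → ℕ := fun y =>
    if h : y ∈ Set.range j then f h.choose else Function.invFun nthD y with ha
  have haj : ∀ x, a (j x) = f x := by
    intro x
    have h : j x ∈ Set.range j := ⟨x, rfl⟩
    have : a (j x) = f h.choose := by simp only [ha, dif_pos h]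
    rw [this]
    have := h.choose_spec
    have : h.choose = x := hjInj this
    rw [this]
  have hanth : ∀ n, a (nthD n) = n := by
    intro n
    have : a (nthD n) = Function.invFun nthD (nthD n) := by
      simp only [ha, dif_neg (hnthMem n)]
    rw [this, Function.leftInverse_invFun hnthInj n]
  have haSur : Function.Surjective a := fun n => ⟨nthD n, hanth n⟩
  have haNotInj : ¬ Function.Injective a := by
    intro hinj
    have h1 : a (j 0) = f 0 := haj 0
    have h2 : a (nthD (f 0)) = f 0 := hanth (f 0)
    have : j 0 = nthD (f 0) := hinj (h1.trans h2.symm)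
    exact hnthMem (f 0) ⟨0, this⟩
  have haS : a ∈ S := hSur a ⟨haSur, haNotInj⟩
  have : (a ∘ j) ∈ S := hS j a hjS haS
  have hfa : f = a ∘ j := funext fun x => (haj x).symm
  rwa [hfa]

/-- A subsemigroup of T(ℕ) containing Sur(ℕ), some injective non-surjective map,
and some element of FI(ℕ) is all of T(ℕ). -/
theorem sub_containing_Sur_eq_univ :
    ∀ S : Set (ℕ → ℕ), IsSubsemigroupT S →
      (∀ f, SurSet f → f ∈ S) →
      (∃ f ∈ S, InjSet f) →
      (∃ f ∈ S, FISet f) →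
      S = Set.univ := by
  intro S hS hSur ⟨i, hiS, hiInj, hiNotSur⟩ ⟨γ, hgS, hgCo, hgColl⟩
  classical
  -- the set of points where γ is non-injective
  set B : Set ℕ := {x | ∃ y, y ≠ x ∧ γ y = γ x} with hBdef
  have hBfin : B.Finite := by
    have hC := hgColl
    have hsub : B ⊆ {x | ∃ y, y < x ∧ γ y = γ x} ∪
        ⋃ x ∈ {x | ∃ y, y < x ∧ γ y = γ x}, Set.Iio x := by
      rintro x ⟨y, hne, heq⟩
      rcases lt_trichotomy y x with h | h | h
      · exact Or.inl ⟨y, h, heq⟩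
      · exact absurd h hne
      · refine Or.inr (Set.mem_biUnion ?_ h)
        exact ⟨x, h, heq.symm⟩
    exact Set.Finite.subset (hC.union (hC.biUnion fun x _ => Set.finite_Iio x)) hsub
  -- outside B, γ is "injective"
  have hBkey : ∀ x z, x ∉ B → γ z = γ x → z = x := by
    intro x z hx heq
    by_contra hne
    exact hx ⟨z, hne, heq⟩
  -- bound on B
  obtain ⟨N, hN⟩ : ∃ N, ∀ x ∈ B, x < N :=
    ⟨hBfin.toFinset.sup id + 1, fun x hx =>
      Nat.lt_succ_of_le (Finset.le_sup (f := id) (hBfin.mem_toFinset.mpr hx))⟩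
  set k : ℕ := N + 1 with hk
  -- a point missed by i
  obtain ⟨acap, hacap⟩ : ∃ b, b ∉ Set.range i := by
    by_contra h
    push_neg at h
    exact hiNotSur fun b => h b
  -- orbit facts
  have horbit_not : ∀ t, t < k → i^[t] acap ∉ Set.range (i^[k]) := by
    rintro t ht ⟨x, hx⟩
    have hkt : k = t + (k - t) := by omega
    rw [hkt, Function.iterate_add_apply] at hx
    have h1 : i^[k - t] x = acap := (hiInj.iterate t) hx
    have h2 : k - t = (k - t - 1) + 1 := by omega
    rw [h2, Function.iterate_succ_apply'] at h1
    exact hacap ⟨_, h1⟩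
  have horbit_inj : ∀ t s, i^[t] acap = i^[s] acap → t = s := by
    have key : ∀ t s, t < s → i^[t] acap ≠ i^[s] acap := by
      intro t s hts heq
      have hst : s = t + (s - t) := by omega
      rw [hst, Function.iterate_add_apply] at heq
      have h1 : acap = i^[s - t] acap := (hiInj.iterate t) heq
      have h2 : s - t = (s - t - 1) + 1 := by omega
      rw [h2, Function.iterate_succ_apply'] at h1
      exact hacap ⟨_, h1.symm⟩
    intro t s h
    rcases lt_trichotomy t s with h' | h' | h'
    · exact absurd h (key t s h')
    · exact h'
    · exact absurd h.symm (key s t h')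
  -- i^[k] ∈ S
  have hikS : ∀ n, (i^[n + 1]) ∈ S := by
    intro n
    induction n with
    | zero => simpa [Function.iterate_one] using hiS
    | succ m ih =>
      have : (i ∘ i^[m + 1]) ∈ S := hS (i^[m + 1]) i ih hiS
      rwa [← Function.iterate_succ' i (m + 1)] at this

  have hikS' : (i^[k]) ∈ S := by
    have := hikS N
    rwa [hk]
  -- enumeration of Bᶜ
  have hBc : {x : ℕ | x ∉ B}.Infinite := hBfin.infinite_compl
  set nthB : ℕ → ℕ := Nat.nth (fun x => x ∉ B) with hnthB
  have hnthBmem : ∀ n, nthB n ∉ B := fun n => Nat.nth_mem_of_infinite hBc n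
  have hnthBinj : Function.Injective nthB := Nat.nth_injective hBc
  have hnthBrange : ∀ z, z ∉ B → ∃ n, nthB n = z := by
    intro z hz
    have := Nat.range_nth_of_infinite hBc
    have : z ∈ Set.range nthB := by rw [hnthB, this]; exact hz
    exact this
  -- the surjection σ
  set σ : ℕ → ℕ := fun x =>
    if h : x ∈ Set.range (i^[k]) then nthB h.choose
    else if h2 : ∃ t, t < k ∧ i^[t] acap = x then h2.choose else 0 with hσ
  have hσR : ∀ y, σ (i^[k] y) = nthB y := by
    intro y
    have h : i^[k] y ∈ Set.range (i^[k]) := ⟨y, rfl⟩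
    have e1 : σ (i^[k] y) = nthB h.choose := by simp only [hσ, dif_pos h]
    have e2 : h.choose = y := (hiInj.iterate k) h.choose_spec
    rw [e1, e2]
  have hσC : ∀ t, t < k → σ (i^[t] acap) = t := by
    intro t ht
    have hnotR : i^[t] acap ∉ Set.range (i^[k]) := horbit_not t ht
    have h2 : ∃ s, s < k ∧ i^[s] acap = i^[t] acap := ⟨t, ht, rfl⟩
    have e1 : σ (i^[t] acap) = h2.choose := by
      simp only [hσ, dif_neg hnotR, dif_pos h2]
    have := h2.choose_spec
    have e2 : h2.choose = t := horbit_inj _ _ this.2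
    rw [e1, e2]
  -- σ is surjective
  have hσSur : Function.Surjective σ := by
    intro z
    by_cases hz : z ∈ B
    · have hzk : z < k := by have := hN z hz; omega
      exact ⟨i^[z] acap, hσC z hzk⟩
    · obtain ⟨n, hn⟩ := hnthBrange z hz
      exact ⟨i^[k] n, by rw [hσR n, hn]⟩
  -- σ is not injective
  have hσNotInj : ¬ Function.Injective σ := by
    intro hinj
    have hNB : N ∉ B := fun h => absurd (hN N h) (lt_irrefl N)
    obtain ⟨n, hn⟩ := hnthBrange N hNB
    have h1 : σ (i^[k] n) = N := by rw [hσR n, hn]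
    have h2 : σ (i^[N] acap) = N := hσC N (by omega)
    have : i^[k] n = i^[N] acap := hinj (h1.trans h2.symm)
    exact horbit_not N (by omega) ⟨n, this⟩
  have hσS : σ ∈ S := hSur σ ⟨hσSur, hσNotInj⟩
  -- the injective coinfinite-range element j
  set j : ℕ → ℕ := γ ∘ (σ ∘ i^[k]) with hj
  have hjS : j ∈ S := hS (σ ∘ i^[k]) γ (hS (i^[k]) σ hikS' hσS) hgS
  have hjInj : Function.Injective j := by
    intro x y hxy
    have hx : j x = γ (nthB x) := by simp only [hj, Function.comp_apply, hσR]
    have hy : j y = γ (nthB y) := by simp only [hj, Function.comp_apply, hσR]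
    rw [hx, hy] at hxy
    have : nthB y = nthB x := hBkey (nthB x) (nthB y) (hnthBmem x) hxy.symm
    exact (hnthBinj this).symm
  have hjCo : ((Set.range j)ᶜ : Set ℕ).Infinite := by
    apply hgCo.mono
    intro z hz
    rintro ⟨x, hx⟩
    exact hz ⟨σ (i^[k] x), hx⟩
  ext f
  simp only [Set.mem_univ, iff_true]
  exact mem_of_inj_coinfinite S hS hSur j hjS hjInj hjCo f
end

section
/- Let S be a subsemigroup of T(ℕ) containing Inj(ℕ) (all injective non-surjective maps) and intersecting each of Sur(ℕ), C_p(ℕ), and IF(ℕ) nontrivially. Then S = T(ℕ). -/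
/-- The set of "non-minimal" points: x such that some earlier point has the same image. -/
def NN (s : ℕ → ℕ) : Set ℕ := {x | ∃ y, y < x ∧ s y = s x}

noncomputable def minInv (s : ℕ → ℕ) (hs : Function.Surjective s) (n : ℕ) : ℕ :=
  Nat.find (hs n)

lemma minInv_spec {s : ℕ → ℕ} (hs : Function.Surjective s) (n : ℕ) :
    s (minInv s hs n) = n := Nat.find_spec (hs n)

lemma minInv_min {s : ℕ → ℕ} (hs : Function.Surjective s) {n y : ℕ} (h : s y = n) :
    minInv s hs n ≤ y := Nat.find_min' _ h

lemma minInv_inj {s : ℕ → ℕ} (hs : Function.Surjective s) :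
    Function.Injective (minInv s hs) := by
  intro a b h
  have ha := minInv_spec hs a
  rw [h, minInv_spec hs b] at ha
  exact ha.symm

lemma mem_NN_not_range {s : ℕ → ℕ} (hs : Function.Surjective s) {x : ℕ} (hx : x ∈ NN s) :
    x ∉ Set.range (minInv s hs) := by
  rintro ⟨n, rfl⟩
  obtain ⟨y, hy, hsy⟩ := hx
  have h1 : s (minInv s hs n) = n := minInv_spec hs n
  have h2 : minInv s hs n ≤ y := minInv_min hs (by rw [hsy, h1])
  omega

lemma minInv_notMem_NN {s : ℕ → ℕ} (hs : Function.Surjective s) (n : ℕ) :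
    minInv s hs n ∉ NN s := fun hx => mem_NN_not_range hs hx ⟨n, rfl⟩

lemma NN_mono {s : ℕ → ℕ} (t : ℕ → ℕ) : NN s ⊆ NN (t ∘ s) := by
  rintro x ⟨y, hy, h⟩
  exact ⟨y, hy, by simp [Function.comp, h]⟩

lemma growNN {s σ : ℕ → ℕ} (hs : Function.Surjective s) (hσ : ¬ Function.Injective σ) :
    NN (σ ∘ s) ≠ NN s := by
  intro hEq
  apply hσ
  intro a b hab
  have ha := minInv_notMem_NN hs a
  have hb := minInv_notMem_NN hs b
  set x := minInv s hs a with hxdef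
  set y := minInv s hs b with hydef
  have hsx : s x = a := minInv_spec hs a
  have hsy : s y = b := minInv_spec hs b
  have hxy : σ (s x) = σ (s y) := by rw [hsx, hsy]; exact hab
  rcases lt_trichotomy x y with h | h | h
  · exact absurd (hEq ▸ (⟨x, h, by simpa using hxy⟩ : y ∈ NN (σ ∘ s))) hb
  · rw [← hsx, ← hsy, h]
  · exact absurd (hEq ▸ (⟨y, h, by simpa using hxy.symm⟩ : x ∈ NN (σ ∘ s))) ha

/-- A subsemigroup of T(ℕ) containing Inj(ℕ) and meeting Sur(ℕ), C_p(ℕ) and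
IF(ℕ) is all of T(ℕ). -/
theorem sub_containing_Inj_eq_univ :
    ∀ S : Set (ℕ → ℕ), IsSubsemigroupT S →
      (∀ f, InjSet f → f ∈ S) →
      (∃ f ∈ S, SurSet f) →
      (∃ f ∈ S, CpSet f) →
      (∃ f ∈ S, IFSet f) →
      S = Set.univ := by
  classical
  rintro S hS hInj ⟨σ, hσS, hσsur, hσninj⟩ ⟨c, hcS, hc⟩ ⟨γ, hγS, hγdef, hγcol⟩
  -- iterates of σ are in S and surjective
  have pow_mem : ∀ k : ℕ, σ^[k + 1] ∈ S ∧ Function.Surjective σ^[k + 1] := by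
    intro k
    induction k with
    | zero => simpa using ⟨hσS, hσsur⟩
    | succ k ih =>
        rw [Function.iterate_succ' (f := σ) (n := k + 1)]
        exact ⟨hS _ σ ih.1 hσS, hσsur.comp ih.2⟩
  -- the "collapse sets" of iterates get arbitrarily large
  have big : ∀ j : ℕ, ∃ k : ℕ, ∃ A : Finset ℕ,
      (↑A : Set ℕ) ⊆ NN (σ^[k + 1]) ∧ j ≤ A.card := by
    intro j
    induction j with
    | zero => exact ⟨0, ∅, by simp, by simp⟩
    | succ j ih =>
        obtain ⟨k, A, hA, hcard⟩ := ih
        have hsub : NN (σ^[k + 1]) ⊆ NN (σ^[k + 2]) := by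
          rw [Function.iterate_succ' (f := σ) (n := k + 1)]
          exact NN_mono σ
        have hne : NN (σ^[k + 2]) ≠ NN (σ^[k + 1]) := by
          rw [Function.iterate_succ' (f := σ) (n := k + 1)]
          exact growNN (pow_mem k).2 hσninj
        obtain ⟨x, hx2, hx1⟩ := Set.exists_of_ssubset (hsub.ssubset_of_ne (Ne.symm hne))
        have hxA : x ∉ A := fun hmem => hx1 (hA hmem)
        exact ⟨k + 1, insert x A,
          by
            rw [Finset.coe_insert]
            exact Set.insert_subset hx2 (hA.trans hsub),
          by rw [Finset.card_insert_of_notMem hxA]; omega⟩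
  -- Step A: build a surjection ρ ∈ S with infinite collapse set
  set p : ℕ → Prop := fun x => x ∈ Set.range γ with hpdef
  have hpinf : (setOf p).Infinite := by
    have := hγdef.infinite_compl
    rwa [compl_compl] at this
  set Fs : Finset ℕ := hγdef.toFinset with hFsdef
  obtain ⟨k, A₀, hA₀, hA₀card⟩ := big (Fs.card + 1)
  obtain ⟨A, hAsub, hAcard⟩ := Finset.exists_subset_card_eq hA₀card
  have hA : (↑A : Set ℕ) ⊆ NN (σ^[k + 1]) := (Finset.coe_subset.mpr hAsub).trans hA₀
  set s : ℕ → ℕ := σ^[k + 1] with hsdef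
  obtain ⟨hsS, hssur⟩ := pow_mem k
  have hApos : 0 < A.card := by omega
  obtain ⟨n₀, hn₀⟩ := Finset.card_pos.mp hApos
  have hcarderase : Fs.card = (A.erase n₀).card := by
    rw [Finset.card_erase_of_mem hn₀, hAcard]; omega
  set e : Fs ≃ (A.erase n₀ : Finset ℕ) := Finset.equivOfCardEq hcarderase with hedef
  set m : ℕ → ℕ := minInv s hssur with hmdef
  set t : ℕ → ℕ := fun x =>
    if hx : x ∈ Set.range γ then m (Nat.count p x)
    else (e ⟨x, by rw [hFsdef, Set.Finite.mem_toFinset]; exact hx⟩ : ℕ) with htdef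
  have ht_in : ∀ x (hx : x ∈ Set.range γ), t x = m (Nat.count p x) := by
    intro x hx; rw [htdef]; simp only [dif_pos hx]
  have ht_out : ∀ x (hx : ¬ x ∈ Set.range γ),
      t x = (e ⟨x, by rw [hFsdef, Set.Finite.mem_toFinset]; exact hx⟩ : ℕ) := by
    intro x hx; rw [htdef]; simp only [dif_neg hx]
  have he_mem : ∀ z : Fs, (e z : ℕ) ∈ A.erase n₀ := fun z => (e z).2
  have he_notrange : ∀ z : Fs, (e z : ℕ) ∉ Set.range m := by
    intro z
    exact mem_NN_not_range hssur (hA (Finset.mem_of_mem_erase (he_mem z)))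
  have htinj : Function.Injective t := by
    intro a b hab
    by_cases haγ : a ∈ Set.range γ <;> by_cases hbγ : b ∈ Set.range γ
    · rw [ht_in a haγ, ht_in b hbγ] at hab
      have hcount : Nat.count p a = Nat.count p b := minInv_inj hssur hab
      have ha' := Nat.nth_count (p := p) haγ
      have hb' := Nat.nth_count (p := p) hbγ
      rw [← ha', ← hb', hcount]
    · rw [ht_in a haγ, ht_out b hbγ] at hab
      exact absurd ⟨Nat.count p a, hab⟩ (he_notrange _)
    · rw [ht_out a haγ, ht_in b hbγ] at hab
      exact absurd ⟨Nat.count p b, hab.symm⟩ (he_notrange _)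
    · rw [ht_out a haγ, ht_out b hbγ] at hab
      have := e.injective (Subtype.coe_injective hab)
      exact congrArg Subtype.val this
  have htnsur : ¬ Function.Surjective t := by
    intro hsur
    obtain ⟨x, hx⟩ := hsur n₀
    by_cases hxγ : x ∈ Set.range γ
    · rw [ht_in x hxγ] at hx
      exact mem_NN_not_range hssur (hA hn₀) ⟨Nat.count p x, hx⟩
    · rw [ht_out x hxγ] at hx
      exact Finset.ne_of_mem_erase (he_mem _) hx
  have htS : t ∈ S := hInj t ⟨htinj, htnsur⟩
  set ρ : ℕ → ℕ := s ∘ (t ∘ γ) with hρdef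
  have hρS : ρ ∈ S := hS _ s (hS γ t hγS htS) hsS
  have hρsur : Function.Surjective ρ := by
    intro n
    have hz : p (Nat.nth p n) := Nat.nth_mem_of_infinite hpinf n
    obtain ⟨x, hx⟩ := hz
    refine ⟨x, ?_⟩
    have : t (γ x) = m n := by
      rw [ht_in (γ x) ⟨x, rfl⟩]
      rw [hx, Nat.count_nth_of_infinite hpinf n]
    show s (t (γ x)) = n
    rw [this, hmdef]
    exact minInv_spec hssur n
  have hNγρ : NN γ ⊆ NN ρ := by
    rintro x ⟨y, hy, h⟩
    exact ⟨y, hy, by show s (t (γ y)) = s (t (γ x)); rw [h]⟩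
  have hNρinf : (NN ρ).Infinite := Set.Infinite.mono hNγρ hγcol
  -- Step B: right inverse of ρ with infinite co-range
  set τ : ℕ → ℕ := minInv ρ hρsur with hτdef
  have hτcompl : ((Set.range τ)ᶜ : Set ℕ).Infinite :=
    hNρinf.mono (fun x hx => mem_NN_not_range hρsur hx)
  -- Step C: enumeration of infinite fibers of c
  set q : ℕ → Prop := fun y => (c ⁻¹' {y}).Infinite with hqdef
  have hqinf : (setOf q).Infinite := hc
  set y' : ℕ → ℕ := fun n => Nat.nth q (2 * n) with hy'def
  have hy'inj : Function.Injective y' := by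
    intro a b hab
    have := Nat.nth_injective hqinf hab
    omega
  have hy'fib : ∀ n, (c ⁻¹' {y' n}).Infinite := fun n => Nat.nth_mem_of_infinite hqinf (2 * n)
  -- enumeration of the complement of range τ
  set r : ℕ → Prop := fun x => x ∈ (Set.range τ)ᶜ with hrdef
  have hrinf : (setOf r).Infinite := hτcompl
  set w : ℕ → ℕ := fun n => Nat.nth r n with hwdef
  have hwinj : Function.Injective w := Nat.nth_injective hrinf
  have hwmem : ∀ n, w n ∉ Set.range τ := fun n => Nat.nth_mem_of_infinite hrinf n
  -- the plumbing injection t'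
  set t' : ℕ → ℕ := fun x => if hx : ∃ n, y' n = x then τ hx.choose else w (x + 1) with ht'def
  have ht'y : ∀ n, t' (y' n) = τ n := by
    intro n
    have hx : ∃ m, y' m = y' n := ⟨n, rfl⟩
    rw [ht'def]
    simp only [dif_pos hx]
    congr 1
    exact hy'inj hx.choose_spec
  have ht'out : ∀ x, (¬ ∃ n, y' n = x) → t' x = w (x + 1) := by
    intro x hx; rw [ht'def]; simp only [dif_neg hx]
  have ht'inj : Function.Injective t' := by
    intro a b hab
    by_cases ha : ∃ n, y' n = a <;> by_cases hb : ∃ n, y' n = b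
    · rw [ht'def] at hab
      simp only [dif_pos ha, dif_pos hb] at hab
      have := minInv_inj hρsur hab
      rw [← ha.choose_spec, ← hb.choose_spec, this]
    · rw [ht'def] at hab
      simp only [dif_pos ha, dif_neg hb] at hab
      exact absurd (hab ▸ ⟨ha.choose, rfl⟩) (hwmem (b + 1))
    · rw [ht'def] at hab
      simp only [dif_neg ha, dif_pos hb] at hab
      exact absurd (hab.symm ▸ ⟨hb.choose, rfl⟩) (hwmem (a + 1))
    · rw [ht'out a ha, ht'out b hb] at hab
      have := hwinj hab
      omega
  have ht'nsur : ¬ Function.Surjective t' := by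
    intro hsur
    obtain ⟨x, hx⟩ := hsur (w 0)
    by_cases hxr : ∃ n, y' n = x
    · rw [ht'def] at hx
      simp only [dif_pos hxr] at hx
      exact hwmem 0 (hx ▸ ⟨hxr.choose, rfl⟩)
    · rw [ht'out x hxr] at hx
      have := hwinj hx
      omega
  have ht'S : t' ∈ S := hInj t' ⟨ht'inj, ht'nsur⟩
  -- now take any f
  apply Set.eq_univ_of_forall
  intro f
  -- build h with c ∘ h = y' ∘ f, h injective, non-surjective
  have hex : ∀ (x bnd : ℕ), ∃ z, c z = y' (f x) ∧ bnd < z := by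
    intro x bnd
    obtain ⟨z, hz, hlt⟩ := (hy'fib (f x)).exists_gt bnd
    exact ⟨z, by simpa using hz, hlt⟩
  set b : ℕ → ℕ := fun n =>
    Nat.rec (motive := fun _ => ℕ) 0 (fun x bx => Nat.find (hex x bx)) n with hbdef
  have hb0 : b 0 = 0 := rfl
  have hbsucc : ∀ x, b (x + 1) = Nat.find (hex x (b x)) := fun x => rfl
  have hbspec : ∀ x, c (b (x + 1)) = y' (f x) ∧ b x < b (x + 1) := by
    intro x
    rw [hbsucc]
    exact Nat.find_spec (hex x (b x))
  have hbmono : StrictMono b := strictMono_nat_of_lt_succ (fun n => (hbspec n).2)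
  set h : ℕ → ℕ := fun x => b (x + 1) with hhdef
  have hhinj : Function.Injective h := by
    intro a₁ a₂ hab
    have : a₁ + 1 = a₂ + 1 := hbmono.injective hab
    omega
  have hhnsur : ¬ Function.Surjective h := by
    intro hsur
    obtain ⟨x, hx⟩ := hsur 0
    have : b 0 < b (x + 1) := hbmono (Nat.succ_pos x)
    rw [hb0] at this
    have hx' : b (x + 1) = 0 := hx
    omega
  have hhS : h ∈ S := hInj h ⟨hhinj, hhnsur⟩
  have hch : ∀ x, c (h x) = y' (f x) := fun x => (hbspec x).1
  -- the composite is f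
  have hmem : (ρ ∘ (t' ∘ (c ∘ h))) ∈ S := hS _ ρ (hS _ t' (hS h c hhS hcS) ht'S) hρS
  have heq : (ρ ∘ (t' ∘ (c ∘ h))) = f := by
    funext x
    show ρ (t' (c (h x))) = f x
    rw [hch x, ht'y (f x), hτdef]
    exact minInv_spec hρsur (f x)
  rwa [heq] at hmem
end

section
/- For every α ∈ C_p(ℕ) ∩ Sur(ℕ) (surjective with infinitely many infinite fibers) and every injective β : ℕ → ℕ, there exists γ ∈ FI(ℕ) (injective on ℕ with infinite co-image, in fact γ injective with d(γ) = ℵ₀ and c(γ) = 0) such that β = γ followed by α, i.e. β(x) = α(γ(x)) for all x. Consequently, the subsemigroup generated by FI(ℕ) ∪ {α} equals T(ℕ). -/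
lemma pick_injective (F : ℕ → Set ℕ) (hF : ∀ n, (F n).Infinite)
    (hdisj : ∀ m n, m ≠ n → Disjoint (F m) (F n)) (f : ℕ → ℕ) :
    ∃ i : ℕ → ℕ, Function.Injective i ∧ ∀ x, i x ∈ F (f x) := by
  set V : ℕ → ℕ → ℕ := fun n x => (((hF n).natEmbedding) x : ℕ) with hV
  have hVmem : ∀ n x, V n x ∈ F n := fun n x => (((hF n).natEmbedding) x).2
  have hVinj : ∀ n, Function.Injective (V n) := by
    intro n a b h
    exact ((hF n).natEmbedding).injective (Subtype.val_injective h)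
  refine ⟨fun x => V (f x) x, ?_, fun x => hVmem (f x) x⟩
  intro a b h
  have h' : V (f a) a = V (f b) b := h
  by_cases hfe : f a = f b
  · rw [hfe] at h'
    exact hVinj (f b) h'
  · exfalso
    have ha : V (f a) a ∈ F (f a) := hVmem (f a) a
    have hb : V (f b) b ∈ F (f b) := hVmem (f b) b
    rw [h'] at ha
    exact (hdisj (f a) (f b) hfe).le_bot ⟨ha, hb⟩

open Classical in
noncomputable def jmap (p y : ℕ → ℕ) {C : Set ℕ} (hC : C.Infinite) : ℕ → ℕ :=
  fun x => if h : ∃ n, y n = x then p h.choose else ((hC.natEmbedding) x : ℕ)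

lemma part1_lemma (α : ℕ → ℕ) (hCp : CpSet α) (hSur : SurSet α)
    (β : ℕ → ℕ) (hβ : Function.Injective β) :
    ∃ γ : ℕ → ℕ, Function.Injective γ ∧ ((Set.range γ)ᶜ : Set ℕ).Infinite ∧
      β = α ∘ γ := by
  choose γ hγ using fun x => hSur.1 (β x)
  refine ⟨γ, ?_, ?_, ?_⟩
  · intro a b h
    apply hβ
    rw [← hγ a, ← hγ b, h]
  · obtain ⟨y0, hy0⟩ := hCp.nonempty
    have hy0' : (α ⁻¹' {y0}).Infinite := hy0
    have hss : (β ⁻¹' {y0}).Subsingleton := fun a ha b hb => hβ (ha.trans hb.symm)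
    have hfin : (γ '' (β ⁻¹' {y0})).Finite := (hss.image γ).finite
    apply ((hy0'.diff hfin).mono ?_)
    rintro z ⟨hz1, hz2⟩
    rintro ⟨a, rfl⟩
    exact hz2 ⟨a, by simpa [hγ a] using hz1, rfl⟩
  · funext x
    exact (hγ x).symm

/-- For α ∈ C_p(ℕ) ∩ Sur(ℕ) and injective β, there is an injective γ with
infinite co-image (hence γ ∈ FI(ℕ)) such that β = γ followed by α; consequently
⟨FI(ℕ) ∪ {α}⟩ = T(ℕ). -/
theorem FI_with_CpSur_generates :
    (∀ α : ℕ → ℕ, CpSet α → SurSet α →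
      ∀ β : ℕ → ℕ, Function.Injective β →
        ∃ γ : ℕ → ℕ, Function.Injective γ ∧ ((Set.range γ)ᶜ : Set ℕ).Infinite ∧
          β = α ∘ γ) ∧
    (∀ α : ℕ → ℕ, CpSet α → SurSet α →
      ∀ S : Set (ℕ → ℕ), IsSubsemigroupT S → (∀ f, FISet f → f ∈ S) →
        α ∈ S → S = Set.univ) := by
  refine ⟨part1_lemma, ?_⟩
  intro α hCp hSur S hS hFI hα
  -- every injective function is in S
  have hinjS : ∀ β : ℕ → ℕ, Function.Injective β → β ∈ S := by
    intro β hβ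
    obtain ⟨γ, hγi, hγc, hβeq⟩ := part1_lemma α hCp hSur β hβ
    have hγS : γ ∈ S := by
      apply hFI
      refine ⟨hγc, ?_⟩
      have : {x : ℕ | ∃ y, y < x ∧ γ y = γ x} = ∅ := by
        ext x
        simp only [Set.mem_setOf_eq, Set.mem_empty_iff_false, iff_false, not_exists]
        rintro y ⟨hy, hxy⟩
        exact hy.ne (hγi hxy)
      rw [this]; exact Set.finite_empty
    rw [hβeq]
    exact hS γ α hγS hα
  ext f
  simp only [Set.mem_univ, iff_true]
  -- right inverse p of α
  choose p hp using hSur.1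
  have hpinj : Function.Injective p := fun a b h => by rw [← hp a, ← hp b, h]
  -- enumeration of infinite fibers
  set e := hCp.natEmbedding with he
  set y : ℕ → ℕ := fun n => (e n).val with hy
  have hyinj : Function.Injective y := fun a b h => e.injective (Subtype.val_injective h)
  have hyfib : ∀ n, (α ⁻¹' {y n}).Infinite := fun n => (e n).2
  -- complement of range p is infinite
  have hC : ((Set.range p)ᶜ : Set ℕ).Infinite := by
    apply ((hyfib 0).diff (Set.finite_singleton (p (y 0)))).mono
    rintro z ⟨hz1, hz2⟩
    rintro ⟨n, rfl⟩
    apply hz2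
    have h1 : α (p n) = y 0 := hz1
    rw [hp n] at h1
    rw [h1]
    exact rfl
  -- the map j
  set j : ℕ → ℕ := jmap p y hC with hj
  have hjy : ∀ n, j (y n) = p n := by
    intro n
    have h : ∃ m, y m = y n := ⟨n, rfl⟩
    have h2 : j (y n) = p h.choose := by
      rw [hj, jmap]
      exact dif_pos h
    rw [h2, hyinj h.choose_spec]
  have hjinj : Function.Injective j := by
    intro a b h
    simp only [hj, jmap] at h
    by_cases ha : ∃ n, y n = a <;> by_cases hb : ∃ n, y n = b
    · rw [dif_pos ha, dif_pos hb] at h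
      rw [← ha.choose_spec, ← hb.choose_spec, hpinj h]
    · rw [dif_pos ha, dif_neg hb] at h
      exact absurd ⟨ha.choose, h⟩ ((hC.natEmbedding) b).2
    · rw [dif_neg ha, dif_pos hb] at h
      exact absurd ⟨hb.choose, h.symm⟩ ((hC.natEmbedding) a).2
    · rw [dif_neg ha, dif_neg hb] at h
      exact (hC.natEmbedding).injective (Subtype.val_injective h)
  have hgS : α ∘ j ∈ S := hS j α (hinjS j hjinj) hα
  have hg : ∀ n, (α ∘ j) (y n) = n := by
    intro n
    simp only [Function.comp_apply, hjy n, hp n]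
  -- the map i1
  have hdisj : ∀ m n, m ≠ n → Disjoint (α ⁻¹' {y m}) (α ⁻¹' {y n}) := by
    intro m n hmn
    rw [Set.disjoint_left]
    rintro z hz1 hz2
    have h1 : α z = y m := hz1
    have h2 : α z = y n := hz2
    exact hmn (hyinj (h1.symm.trans h2))
  obtain ⟨i1, hi1inj, hi1mem⟩ := pick_injective (fun n => α ⁻¹' {y n}) hyfib hdisj f
  have hfeq : f = (α ∘ j) ∘ (α ∘ i1) := by
    funext x
    have hx : α (i1 x) = y (f x) := hi1mem x
    simp only [Function.comp_apply, hx]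
    exact (hg (f x)).symm
  rw [hfeq]
  exact hS (α ∘ i1) (α ∘ j) (hS i1 α (hinjS i1 hi1inj) hα) hgS
end

section
/- For every α ∈ FI(ℕ) ∩ Inj(ℕ) (injective with infinite co-image) and every injective β : ℕ → ℕ, there exists γ ∈ IF(ℕ) (surjective with infinite collapse, finite—indeed zero—defect) such that β = α followed by γ, i.e. β(x) = γ(α(x)) for all x. Consequently ⟨IF(ℕ) ∪ {α}⟩ = T(ℕ). -/
lemma key_factor (α : ℕ → ℕ) (hα : Function.Injective α)
    (hc : ((Set.range α)ᶜ : Set ℕ).Infinite) (β : ℕ → ℕ) :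
    ∃ γ : ℕ → ℕ, Function.Surjective γ ∧
      {x : ℕ | ∃ y, y < x ∧ γ y = γ x}.Infinite ∧ β = γ ∘ α := by
  classical
  set p : ℕ → Prop := fun y => y ∉ Set.range α with hp
  have hpinf : (setOf p).Infinite := hc
  set γ : ℕ → ℕ := fun y =>
    if h : y ∈ Set.range α then β (Function.invFun α y)
     else (Nat.count p y).unpair.1 with hγ
  have hmem : ∀ k, γ (Nat.nth p k) = k.unpair.1 := by
    intro k
    have h1 : Nat.nth p k ∉ Set.range α := Nat.nth_mem_of_infinite hpinf k
    show (if h : Nat.nth p k ∈ Set.range α then β (Function.invFun α (Nat.nth p k))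
      else (Nat.count p (Nat.nth p k)).unpair.1) = k.unpair.1
    rw [dif_neg h1, Nat.count_nth_of_infinite hpinf]
  refine ⟨γ, ?_, ?_, ?_⟩
  · intro n
    exact ⟨Nat.nth p (Nat.pair n 0), by simp [hmem]⟩
  · apply Set.infinite_of_injective_forall_mem
      (f := fun m => Nat.nth p (Nat.pair 0 (m + 1)))
    · intro a b hab
      have := (Nat.nth_injective hpinf) hab
      have := Nat.pair_eq_pair.1 this
      omega
    · intro m
      refine ⟨Nat.nth p (Nat.pair 0 m), ?_, ?_⟩
      · exact (Nat.nth_lt_nth hpinf).2 (Nat.pair_lt_pair_right 0 (Nat.lt_succ_self m))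
      · simp [hmem]
  · funext x
    have hx : α x ∈ Set.range α := ⟨x, rfl⟩
    simp [hγ, hx, Function.leftInverse_invFun hα x]

/-- For α ∈ FI(ℕ) ∩ Inj(ℕ) (injective with infinite co-image) and injective β,
there is a surjective γ with infinite collapse (hence γ ∈ IF(ℕ), with zero
defect) such that β = α followed by γ; consequently ⟨IF(ℕ) ∪ {α}⟩ = T(ℕ). -/
theorem IF_with_FIInj_generates :
    (∀ α : ℕ → ℕ, Function.Injective α → ((Set.range α)ᶜ : Set ℕ).Infinite →
      ∀ β : ℕ → ℕ, Function.Injective β →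
        ∃ γ : ℕ → ℕ, Function.Surjective γ ∧
          {x : ℕ | ∃ y, y < x ∧ γ y = γ x}.Infinite ∧ β = γ ∘ α) ∧
    (∀ α : ℕ → ℕ, Function.Injective α → ((Set.range α)ᶜ : Set ℕ).Infinite →
      ∀ S : Set (ℕ → ℕ), IsSubsemigroupT S → (∀ f, IFSet f → f ∈ S) →
        α ∈ S → S = Set.univ) := by
  constructor
  · intro α hα hc β _
    exact key_factor α hα hc β
  · intro α hα hc S hS hIF hαS
    ext f
    simp only [Set.mem_univ, iff_true]
    obtain ⟨γ, hsurj, hcol, hfac⟩ := key_factor α hα hc f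
    have hγIF : IFSet γ := by
      refine ⟨?_, hcol⟩
      have : (Set.range γ)ᶜ = (∅ : Set ℕ) := by
        simp [Set.range_eq_univ.2 hsurj]
      rw [this]; exact Set.finite_empty
    have := hS α γ hαS (hIF γ hγIF)
    rwa [← hfac] at this
end

section
/- The subsemigroup of T(ℕ) generated by C_p(ℕ) equals {α : ℕ → ℕ | some fiber of α is infinite}. In particular, every function ℕ → ℕ that has at least one infinite fiber is a product of two elements of C_p(ℕ), the set of maps with infinitely many infinite fibers, and the set of maps with at least one infinite fiber is closed under composition. Consequently ⟨C_p(ℕ)⟩ ∩ (Inj(ℕ) ∩ FI(ℕ)) = ∅. -/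
/-- Maps with at least one infinite fiber. -/
def HasInfFiber (α : ℕ → ℕ) : Prop := ∃ y : ℕ, (α ⁻¹' {y}).Infinite

/-!
Having an infinite fiber is preserved by composing on the left and fails for injective maps,
and every map in `C_p(ℕ)` has one. Conversely, if `α⁻¹{y₀}` is infinite, enumerate it and
split it into infinitely many infinite pieces by the first coordinate of `Nat.unpair`. Then
`β` sends the `k`-th piece to `3k` and any other `x` to `3x + 1`, and `γ` sends `3k ↦ y₀`,
`3x + 1 ↦ α x`, and the leftover values `3n + 2` to the first coordinate of `Nat.unpair n`,
so both `β` and `γ` lie in `C_p(ℕ)` and `α = γ ∘ β`.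
-/

open Function Set

theorem Set.infinite_setOf_infinite_preimage_singleton {ι κ X Y : Type*} [Infinite ι]
    [Infinite κ] {f : X → Y} (g : ι → κ → X) (hg : ∀ i, Injective (g i)) {h : ι → Y}
    (hh : Injective h) (hfg : ∀ i j, f (g i j) = h i) :
    {y | (f ⁻¹' {y}).Infinite}.Infinite :=
  infinite_of_injective_forall_mem hh fun i =>
    infinite_of_injective_forall_mem (hg i) fun j => hfg i j

theorem HasInfFiber.comp {α : ℕ → ℕ} (hα : HasInfFiber α) (β : ℕ → ℕ) :
    HasInfFiber (β ∘ α) :=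
  let ⟨y, hy⟩ := hα
  ⟨β y, hy.mono fun _ hx => congrArg β hx⟩

theorem CpSet.hasInfFiber {α : ℕ → ℕ} (hα : CpSet α) : HasInfFiber α :=
  hα.nonempty

theorem Function.Injective.not_hasInfFiber {α : ℕ → ℕ} (hα : Injective α) :
    ¬ HasInfFiber α :=
  fun ⟨y, hy⟩ => hy ((finite_singleton y).preimage hα.injOn)

namespace HasInfFiber

variable (α : ℕ → ℕ) (y₀ : ℕ)

def leftFactor (x : ℕ) : ℕ :=
  if α x = y₀ then 3 * (Nat.count (α · = y₀) x).unpair.1 else 3 * x + 1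

def rightFactor (z : ℕ) : ℕ :=
  match z % 3 with
  | 0 => y₀
  | 1 => α (z / 3)
  | _ => (z / 3).unpair.1

theorem rightFactor_three_mul (k : ℕ) : rightFactor α y₀ (3 * k) = y₀ := by
  simp [rightFactor]

theorem rightFactor_three_mul_add_one (x : ℕ) : rightFactor α y₀ (3 * x + 1) = α x := by
  simp [rightFactor, Nat.add_mod, show (3 * x + 1) / 3 = x by omega]

theorem rightFactor_three_mul_add_two (n : ℕ) :
    rightFactor α y₀ (3 * n + 2) = n.unpair.1 := by
  simp [rightFactor, Nat.add_mod, show (3 * n + 2) / 3 = n by omega]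

theorem rightFactor_comp_leftFactor : rightFactor α y₀ ∘ leftFactor α y₀ = α := by
  funext x
  by_cases hx : α x = y₀
  · simp [leftFactor, hx, rightFactor_three_mul]
  · simp [leftFactor, hx, rightFactor_three_mul_add_one]

theorem cpSet_rightFactor : CpSet (rightFactor α y₀) :=
  infinite_setOf_infinite_preimage_singleton (fun m j => 3 * Nat.pair m j + 2)
    (fun m a b (h : 3 * Nat.pair m a + 2 = 3 * Nat.pair m b + 2) =>
      (Nat.pair_eq_pair.mp (by omega : Nat.pair m a = Nat.pair m b)).2)
    injective_id fun m j => by simp [rightFactor_three_mul_add_two]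

variable {α y₀}

theorem cpSet_leftFactor (hy₀ : (α ⁻¹' {y₀}).Infinite) : CpSet (leftFactor α y₀) := by
  have hp : (Set.ofPred (α · = y₀)).Infinite := hy₀
  refine infinite_setOf_infinite_preimage_singleton
    (fun k m => Nat.nth (α · = y₀) (Nat.pair k m))
    (fun k _ _ h => (Nat.pair_eq_pair.mp (Nat.nth_injective hp h)).2)
    (h := (3 * ·)) (fun a b (h : 3 * a = 3 * b) => by omega) fun k m => ?_
  rw [leftFactor, if_pos (Nat.nth_mem_of_infinite hp _), Nat.count_nth_of_infinite hp,
    Nat.unpair_pair]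

theorem exists_cpSet_comp {α : ℕ → ℕ} (hα : HasInfFiber α) :
    ∃ β γ : ℕ → ℕ, CpSet β ∧ CpSet γ ∧ α = γ ∘ β :=
  let ⟨y₀, hy₀⟩ := hα
  ⟨leftFactor α y₀, rightFactor α y₀, cpSet_leftFactor hy₀, cpSet_rightFactor α y₀,
    (rightFactor_comp_leftFactor α y₀).symm⟩

end HasInfFiber

/-- ⟨C_p(ℕ)⟩ = {α | some fiber of α is infinite}: every map with an infinite
fiber is a product of two elements of C_p(ℕ), that set is closed under
composition and contains C_p(ℕ); consequently ⟨C_p(ℕ)⟩ is disjoint from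
Inj(ℕ) ∩ FI(ℕ), the injective maps with infinite co-image. -/
theorem gen_Cp_eq_hasInfFiber :
    (∀ α : ℕ → ℕ, HasInfFiber α →
      ∃ β γ : ℕ → ℕ, CpSet β ∧ CpSet γ ∧ α = γ ∘ β) ∧
    (∀ α β : ℕ → ℕ, HasInfFiber α → HasInfFiber β → HasInfFiber (β ∘ α)) ∧
    (∀ α : ℕ → ℕ, CpSet α → HasInfFiber α) ∧
    (∀ α : ℕ → ℕ, HasInfFiber α →
      ¬ (Function.Injective α ∧ ((Set.range α)ᶜ : Set ℕ).Infinite)) :=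
  ⟨fun _ hα => hα.exists_cpSet_comp, fun _ β hα _ => hα.comp β, fun _ hα => hα.hasInfFiber,
    fun _ hα hinj => hinj.1.not_hasInfFiber hα⟩
end
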